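/- arXiv:2603.15877 — 3 statements merged into one kernel-verified Lean document; each statement's English description precedes it below -/
import Mathlib

section
/- Let G be a locally compact group, T a right positive definite continuous function on G, and f a compactly supported continuous function. Then the function f * T * f♭ is again right positive definite, where f♭(s) = conj(f(s⁻¹)). Moreover if T is compactly supported then so is f * T * f♭. -/
open MeasureTheory Complex ComplexConjugate
open scoped ENNReal Pointwise

section Aux

variable {G : Type*} [Group G] [TopologicalSpace G] [IsTopologicalGroup G]
    [LocallyCompactSpace G] [MeasurableSpace G] [BorelSpace G]

/-- compact support from support contained in a compact set (no Hausdorff assumption,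
only R₁, which holds in topological groups). -/
lemma aux_hcs_of_subset {X : Type*} [TopologicalSpace X] [R1Space X] {φ : X → ℂ}
    {s : Set X} (hs : IsCompact s) (h : Function.support φ ⊆ s) : HasCompactSupport φ :=
  IsCompact.of_isClosed_subset hs.closure isClosed_closure (closure_mono h)

/-- noncommutative convolution -/
noncomputable def aux_conv (μ : Measure G) (f T : G → ℂ) : G → ℂ :=
  fun z => ∫ w, f w * T (w⁻¹ * z) ∂μ

lemma aux_conv_cont (μ : Measure G) [IsFiniteMeasureOnCompacts μ]
    {f T : G → ℂ} (hf : Continuous f) (hfc : HasCompactSupport f) (hT : Continuous T) :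
    Continuous (aux_conv μ f T) := by
  apply continuous_iff_continuousAt.2 (fun z₀ => ?_)
  obtain ⟨t, t_comp, ht⟩ := exists_compact_mem_nhds z₀
  have A : ContinuousOn (aux_conv μ f T) t := by
    apply continuousOn_integral_of_compact_support (hfc : IsCompact (tsupport f))
    · exact ((hf.comp continuous_snd).mul
        (hT.comp ((continuous_snd.inv).mul continuous_fst))).continuousOn
    · intro p x _ hx
      simp [image_eq_zero_of_notMem_tsupport hx]
  exact A.continuousAt ht

lemma aux_conv_support (μ : Measure G) (f T : G → ℂ) :
    Function.support (aux_conv μ f T) ⊆ tsupport f * tsupport T := by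
  intro z hz
  by_contra h
  apply hz
  have hzero : ∀ w, f w * T (w⁻¹ * z) = 0 := by
    intro w
    by_cases hw : f w = 0
    · simp [hw]
    by_cases ht : T (w⁻¹ * z) = 0
    · simp [ht]
    exfalso
    apply h
    have := Set.mul_mem_mul (subset_tsupport f hw) (subset_tsupport T ht)
    rwa [mul_inv_cancel_left] at this
  show aux_conv μ f T z = 0
  simp only [aux_conv, hzero, integral_zero]

/-- Fubini swap helper. -/
lemma aux_swap (μ : Measure G) [IsFiniteMeasureOnCompacts μ] {φ : G → G → ℂ}
    (hφ : Continuous (Function.uncurry φ)) {K L : Set G} (hK : IsCompact K) (hL : IsCompact L)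
    (hsupp : ∀ y w, φ y w ≠ 0 → y ∈ K ∧ w ∈ L) :
    ∫ y, ∫ w, φ y w ∂μ ∂μ = ∫ w, ∫ y, φ y w ∂μ ∂μ := by
  apply integral_integral_swap_of_hasCompactSupport hφ
  apply aux_hcs_of_subset (hK.prod hL)
  rintro ⟨y, w⟩ h
  exact Set.mem_prod.2 (hsupp y w h)

lemma aux_conv_assoc (μ : Measure G) [μ.IsHaarMeasure] {g f T : G → ℂ}
    (hg : Continuous g) (hgc : HasCompactSupport g)
    (hf : Continuous f) (hfc : HasCompactSupport f) (hT : Continuous T) (z : G) :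
    ∫ y, g y * aux_conv μ f T (y⁻¹ * z) ∂μ = aux_conv μ (aux_conv μ g f) T z := by
  have e1 : ∀ y : G, aux_conv μ f T (y⁻¹ * z) = ∫ w, f (y⁻¹ * w) * T (w⁻¹ * z) ∂μ := by
    intro y
    rw [aux_conv, ← integral_mul_left_eq_self (μ := μ) (fun w => f (y⁻¹ * w) * T (w⁻¹ * z)) y]
    congr 1
    funext w
    simp [mul_assoc]
  calc ∫ y, g y * aux_conv μ f T (y⁻¹ * z) ∂μ
      = ∫ y, ∫ w, g y * (f (y⁻¹ * w) * T (w⁻¹ * z)) ∂μ ∂μ := by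
        simp_rw [e1, ← integral_const_mul]
    _ = ∫ w, ∫ y, g y * (f (y⁻¹ * w) * T (w⁻¹ * z)) ∂μ ∂μ := by
        apply aux_swap μ (K := tsupport g) (L := tsupport g * tsupport f)
        · exact (hg.comp continuous_fst).mul
            ((hf.comp ((continuous_fst.inv).mul continuous_snd)).mul
              (hT.comp ((continuous_snd.inv).mul continuous_const)))
        · exact hgc
        · exact hgc.mul hfc
        · intro y w hyw
          have h1 : g y ≠ 0 := fun h => hyw (by simp [h])
          have h2 : f (y⁻¹ * w) ≠ 0 := fun h => hyw (by simp [h])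
          refine ⟨subset_tsupport g h1, ?_⟩
          have := Set.mul_mem_mul (subset_tsupport g h1) (subset_tsupport f h2)
          rwa [mul_inv_cancel_left] at this
    _ = ∫ w, (∫ y, g y * f (y⁻¹ * w) ∂μ) * T (w⁻¹ * z) ∂μ := by
        congr 1
        funext w
        rw [← integral_mul_const]
        congr 1
        funext y
        ring
    _ = aux_conv μ (aux_conv μ g f) T z := rfl

end Aux

theorem stmt7 {G : Type*} [Group G] [TopologicalSpace G] [IsTopologicalGroup G]
    [LocallyCompactSpace G] [MeasurableSpace G] [BorelSpace G]
    (μ : Measure G) [μ.IsHaarMeasure]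
    (T : G → ℂ) (hT : Continuous T)
    (f : G → ℂ) (hf : Continuous f) (hfc : HasCompactSupport f)
    (hpd : ∀ g : G → ℂ, Continuous g → HasCompactSupport g →
      0 ≤ (∫ x, (∫ y, g y * T (y⁻¹ * x) ∂μ) * conj (g x) ∂μ).re ∧
      (∫ x, (∫ y, g y * T (y⁻¹ * x) ∂μ) * conj (g x) ∂μ).im = 0) :
    (∀ g : G → ℂ, Continuous g → HasCompactSupport g →
      0 ≤ (∫ x, (∫ y, g y *
            (∫ z, (∫ w, f w * T (w⁻¹ * z) ∂μ) * conj (f ((y⁻¹ * x)⁻¹ * z)) ∂μ) ∂μ) *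
            conj (g x) ∂μ).re ∧
      (∫ x, (∫ y, g y *
            (∫ z, (∫ w, f w * T (w⁻¹ * z) ∂μ) * conj (f ((y⁻¹ * x)⁻¹ * z)) ∂μ) ∂μ) *
            conj (g x) ∂μ).im = 0) ∧
    (HasCompactSupport T →
      HasCompactSupport (fun x : G =>
        ∫ z, (∫ w, f w * T (w⁻¹ * z) ∂μ) * conj (f (x⁻¹ * z)) ∂μ)) := by
  have hcont_c : Continuous (aux_conv μ f T) := aux_conv_cont μ hf hfc hT
  constructor
  · intro g hg hgc
    -- h = g * f
    set h : G → ℂ := aux_conv μ g f with hh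
    have hcont_h : Continuous h := aux_conv_cont μ hg hgc hf
    have hcs_h : HasCompactSupport h := by
      apply aux_hcs_of_subset (IsCompact.mul (hgc : IsCompact _) (hfc : IsCompact _))
      exact aux_conv_support μ g f
    -- u = h * T
    set u : G → ℂ := aux_conv μ h T with hu
    have hcont_u : Continuous u := aux_conv_cont μ hcont_h hcs_h hT
    -- Step A : inner double integral rewriting
    have hA : ∀ x : G,
        (∫ y, g y *
          (∫ z, (∫ w, f w * T (w⁻¹ * z) ∂μ) * conj (f ((y⁻¹ * x)⁻¹ * z)) ∂μ) ∂μ)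
        = ∫ z, u z * conj (f (x⁻¹ * z)) ∂μ := by
      intro x
      have e1 : ∀ y : G,
          (∫ z, (∫ w, f w * T (w⁻¹ * z) ∂μ) * conj (f ((y⁻¹ * x)⁻¹ * z)) ∂μ)
          = ∫ z, aux_conv μ f T (y⁻¹ * z) * conj (f (x⁻¹ * z)) ∂μ := by
        intro y
        rw [← integral_mul_left_eq_self (μ := μ)
          (fun z => aux_conv μ f T (y⁻¹ * z) * conj (f (x⁻¹ * z))) y]
        congr 1
        funext z
        simp only [aux_conv, inv_mul_cancel_left, mul_inv_rev, inv_inv, mul_assoc]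
      calc (∫ y, g y *
            (∫ z, (∫ w, f w * T (w⁻¹ * z) ∂μ) * conj (f ((y⁻¹ * x)⁻¹ * z)) ∂μ) ∂μ)
          = ∫ y, ∫ z, g y * (aux_conv μ f T (y⁻¹ * z) * conj (f (x⁻¹ * z))) ∂μ ∂μ := by
            simp_rw [e1, ← integral_const_mul]
        _ = ∫ z, ∫ y, g y * (aux_conv μ f T (y⁻¹ * z) * conj (f (x⁻¹ * z))) ∂μ ∂μ := by
            apply aux_swap μ (K := tsupport g) (L := {x} * tsupport f)
            · exact (hg.comp continuous_fst).mul
                ((hcont_c.comp ((continuous_fst.inv).mul continuous_snd)).mul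
                  (continuous_conj.comp (hf.comp (continuous_const.mul continuous_snd))))
            · exact hgc
            · exact isCompact_singleton.mul hfc
            · intro y z hyz
              have h1 : g y ≠ 0 := fun h0 => hyz (by simp [h0])
              have h2 : f (x⁻¹ * z) ≠ 0 := fun h0 => hyz (by simp [h0])
              refine ⟨subset_tsupport g h1, ?_⟩
              have := Set.mul_mem_mul (Set.mem_singleton x) (subset_tsupport f h2)
              rwa [mul_inv_cancel_left] at this
        _ = ∫ z, (∫ y, g y * aux_conv μ f T (y⁻¹ * z) ∂μ) * conj (f (x⁻¹ * z)) ∂μ := by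
            congr 1
            funext z
            rw [← integral_mul_const]
            congr 1
            funext y
            ring
        _ = ∫ z, u z * conj (f (x⁻¹ * z)) ∂μ := by
            congr 1
            funext z
            rw [aux_conv_assoc μ hg hgc hf hfc hT z]
    -- Step C : outer pairing with g turns the f♭ factor into h
    have hC : (∫ x, (∫ z, u z * conj (f (x⁻¹ * z)) ∂μ) * conj (g x) ∂μ)
        = ∫ x, u x * conj (h x) ∂μ := by
      calc (∫ x, (∫ z, u z * conj (f (x⁻¹ * z)) ∂μ) * conj (g x) ∂μ)
          = ∫ x, ∫ z, (u z * conj (f (x⁻¹ * z))) * conj (g x) ∂μ ∂μ := by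
            simp_rw [← integral_mul_const]
        _ = ∫ z, ∫ x, (u z * conj (f (x⁻¹ * z))) * conj (g x) ∂μ ∂μ := by
            apply aux_swap μ (K := tsupport g) (L := tsupport g * tsupport f)
            · exact ((hcont_u.comp continuous_snd).mul
                (continuous_conj.comp (hf.comp ((continuous_fst.inv).mul continuous_snd)))).mul
                (continuous_conj.comp (hg.comp continuous_fst))
            · exact hgc
            · exact hgc.mul hfc
            · intro x z hxz
              have h1 : g x ≠ 0 := fun h0 => hxz (by simp [h0])
              have h2 : f (x⁻¹ * z) ≠ 0 := fun h0 => hxz (by simp [h0])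
              refine ⟨subset_tsupport g h1, ?_⟩
              have := Set.mul_mem_mul (subset_tsupport g h1) (subset_tsupport f h2)
              rwa [mul_inv_cancel_left] at this
        _ = ∫ z, u z * conj (∫ x, g x * f (x⁻¹ * z) ∂μ) ∂μ := by
            congr 1
            funext z
            rw [← integral_conj, ← integral_const_mul]
            congr 1
            funext x
            rw [map_mul]
            ring
        _ = ∫ x, u x * conj (h x) ∂μ := rfl
    have key : (∫ x, (∫ y, g y *
          (∫ z, (∫ w, f w * T (w⁻¹ * z) ∂μ) * conj (f ((y⁻¹ * x)⁻¹ * z)) ∂μ) ∂μ) *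
          conj (g x) ∂μ)
        = ∫ x, (∫ y, h y * T (y⁻¹ * x) ∂μ) * conj (h x) ∂μ := by
      calc (∫ x, (∫ y, g y *
            (∫ z, (∫ w, f w * T (w⁻¹ * z) ∂μ) * conj (f ((y⁻¹ * x)⁻¹ * z)) ∂μ) ∂μ) *
            conj (g x) ∂μ)
          = ∫ x, (∫ z, u z * conj (f (x⁻¹ * z)) ∂μ) * conj (g x) ∂μ := by
            congr 1
            funext x
            rw [hA x]
        _ = ∫ x, u x * conj (h x) ∂μ := hC
        _ = ∫ x, (∫ y, h y * T (y⁻¹ * x) ∂μ) * conj (h x) ∂μ := rfl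
    rw [key]
    exact hpd h hcont_h hcs_h
  · intro hTc
    apply aux_hcs_of_subset
      (((IsCompact.mul (hfc : IsCompact _) (hTc : IsCompact _)).mul
        ((hfc : IsCompact (tsupport f)).inv)) :
        IsCompact ((tsupport f * tsupport T) * (tsupport f)⁻¹))
    intro x hx
    by_contra hmem
    apply hx
    have hzero : ∀ z, (∫ w, f w * T (w⁻¹ * z) ∂μ) * conj (f (x⁻¹ * z)) = 0 := by
      intro z
      by_cases h1 : aux_conv μ f T z = 0
      · show aux_conv μ f T z * conj (f (x⁻¹ * z)) = 0
        simp [h1]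
      by_cases h2 : f (x⁻¹ * z) = 0
      · simp [h2]
      exfalso
      apply hmem
      have hz : z ∈ tsupport f * tsupport T := aux_conv_support μ f T h1
      have := Set.mul_mem_mul hz (Set.inv_mem_inv.2 (subset_tsupport f h2))
      have hxz : z * (x⁻¹ * z)⁻¹ = x := by group
      rwa [hxz] at this
    simp only [hzero, integral_zero]
end

section
/- Let G and H be locally compact groups and π : G → H a continuous homomorphism such that the pullback by π of every left positive definite compactly supported continuous function on H is a left positive definite function on G. Then Δ_G = Δ_H ∘ π on the set where π*(f) ≠ 0 for some left positive definite f ∈ C_c(H); in particular, if for every compact subset of H there is such an f nonvanishing on it (e.g. f = g♯ * g with g = 1 on a large compact set), then Δ_G = Δ_H ∘ π everywhere. -/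
open MeasureTheory Complex ComplexConjugate Set Function
open scoped ENNReal Pointwise

/-- A continuous function `T` on a locally compact group is *left positive definite*
(with respect to a measure `ν`) if `⟨T * u, u⟩ ≥ 0` for every `u ∈ C_c`. -/
def IsLeftPositiveDefinite {K : Type*} [Group K] [TopologicalSpace K]
    [MeasurableSpace K] (ν : Measure K) (T : K → ℂ) : Prop :=
  ∀ u : K → ℂ, Continuous u → HasCompactSupport u →
    0 ≤ (∫ x, (∫ y, T y * u (y⁻¹ * x) ∂ν) * conj (u x) ∂ν).re ∧
    (∫ x, (∫ y, T y * u (y⁻¹ * x) ∂ν) * conj (u x) ∂ν).im = 0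

lemma hcs_of_subset {X : Type*} [TopologicalSpace X] [R1Space X] {E : Type*} [Zero E]
    {f : X → E} {C : Set X}
    (hC : IsCompact C) (h : Function.support f ⊆ C) : HasCompactSupport f :=
  hC.closure.of_isClosed_subset isClosed_closure (closure_mono h)

section Aux

variable {K : Type*} [Group K] [TopologicalSpace K] [IsTopologicalGroup K]
    [LocallyCompactSpace K] [MeasurableSpace K] [BorelSpace K]

omit [Group K] [IsTopologicalGroup K] in
lemma contParam (μ : Measure K) [IsFiniteMeasureOnCompacts μ] {F : K → K → ℂ}
    (hF : Continuous fun p : K × K => F p.1 p.2)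
    (hsupp : ∀ L : Set K, IsCompact L → ∃ M : Set K, IsCompact M ∧
      ∀ x ∈ L, ∀ y, y ∉ M → F x y = 0) :
    Continuous fun x => ∫ y, F x y ∂μ := by
  refine continuous_iff_continuousAt.2 fun x₀ => ?_
  obtain ⟨t, t_comp, ht⟩ := exists_compact_mem_nhds x₀
  obtain ⟨M, M_comp, hM⟩ := hsupp t t_comp
  have A : ContinuousOn (fun x => ∫ y, F x y ∂μ) t := by
    apply continuousOn_integral_of_compact_support M_comp hF.continuousOn
    exact fun p y hp hy => hM p hp y hy
  exact A.continuousAt ht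

lemma testzero (μ : Measure K) [μ.IsHaarMeasure] {Ψ : K → ℂ} (hΨ : Continuous Ψ)
    (h0 : ∀ v : K → ℂ, Continuous v → HasCompactSupport v →
      ∫ x, Ψ x * conj (v x) ∂μ = 0) : ∀ x, Ψ x = 0 := by
  intro x₀
  by_contra hx
  obtain ⟨w, w_comp, w_nonneg, w_pos⟩ := exists_continuous_nonneg_pos (X := K) x₀
  have hv : Continuous fun x => ((w x : ℝ) : ℂ) * Ψ x :=
    (Complex.continuous_ofReal.comp w.continuous).mul hΨ
  have hsub : Function.support (fun x => ((w x : ℝ) : ℂ) * Ψ x) ⊆ tsupport w := by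
    intro x hx'
    have : w x ≠ 0 := by
      intro h; apply hx'; simp [h]
    exact subset_tsupport _ this
  have hvc : HasCompactSupport fun x => ((w x : ℝ) : ℂ) * Ψ x := hcs_of_subset w_comp hsub
  have h := h0 _ hv hvc
  have hre : ∫ x, (w x * Complex.normSq (Ψ x) : ℝ) ∂μ = 0 := by
    have hptw : ∀ x, Ψ x * conj (((w x : ℝ) : ℂ) * Ψ x)
        = ((w x * Complex.normSq (Ψ x) : ℝ) : ℂ) := by
      intro x
      rw [map_mul, Complex.conj_ofReal, Complex.ofReal_mul, Complex.normSq_eq_conj_mul_self]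
      push_cast
      ring
    rw [show (fun x => Ψ x * conj (((w x : ℝ) : ℂ) * Ψ x))
        = fun x => ((w x * Complex.normSq (Ψ x) : ℝ) : ℂ) from funext hptw] at h
    rw [show ∫ x, ((w x * Complex.normSq (Ψ x) : ℝ) : ℂ) ∂μ
        = ((∫ x, w x * Complex.normSq (Ψ x) ∂μ : ℝ) : ℂ) from integral_ofReal] at h
    exact_mod_cast h
  have hcont : Continuous fun x => w x * Complex.normSq (Ψ x) :=
    w.continuous.mul (Complex.continuous_normSq.comp hΨ)
  have hsub2 : Function.support (fun x => w x * Complex.normSq (Ψ x)) ⊆ tsupport w := by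
    intro x hx'
    have : w x ≠ 0 := by
      intro h; apply hx'; simp [h]
    exact subset_tsupport _ this
  have hint : Integrable (fun x => w x * Complex.normSq (Ψ x)) μ := by
    apply hcont.integrable_of_hasCompactSupport
    exact w_comp.closure.of_isClosed_subset isClosed_closure (closure_mono hsub2)
  have hnn : 0 ≤ fun x => w x * Complex.normSq (Ψ x) :=
    fun x => mul_nonneg (w_nonneg x) (Complex.normSq_nonneg _)
  have hmem : x₀ ∈ Function.support fun x => w x * Complex.normSq (Ψ x) := by
    simp only [Function.mem_support]
    exact mul_ne_zero w_pos (by simpa [Complex.normSq_eq_zero] using hx)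
  have hopen : IsOpen (Function.support fun x => w x * Complex.normSq (Ψ x)) :=
    isOpen_compl_singleton.preimage hcont
  have hpos := (integral_pos_iff_support_of_nonneg hnn hint).2 (hopen.measure_pos μ ⟨x₀, hmem⟩)
  rw [hre] at hpos
  exact lt_irrefl _ hpos


lemma sharp (μ : Measure K) [μ.IsHaarMeasure] (T : K → ℂ) (hT : Continuous T)
    (hpd : IsLeftPositiveDefinite μ T) :
    ∀ u : K → ℂ, Continuous u → HasCompactSupport u → ∀ x,
      (∫ y, T (x * y) * u y⁻¹ ∂μ) = ∫ y, conj (T y) * u (y * x) ∂μ := by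
  -- integrability of the inner convolution integrand, for fixed x
  have int_inner : ∀ (u : K → ℂ), Continuous u → HasCompactSupport u → ∀ x : K,
      Integrable (fun y => T y * u (y⁻¹ * x)) μ := by
    intro u hu hcu x
    apply (hT.mul (hu.comp (continuous_inv.mul continuous_const))).integrable_of_hasCompactSupport
    apply hcs_of_subset (isCompact_singleton.mul hcu.inv : IsCompact ({x} * (tsupport u)⁻¹))
    intro y hy
    have h2 : u (y⁻¹ * x) ≠ 0 := fun h => hy (by simp [Function.mem_support, h])
    exact ⟨x, rfl, (y⁻¹ * x)⁻¹, Set.inv_mem_inv.2 (subset_tsupport _ h2), by group⟩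
  -- continuity of the inner convolution
  have cont_inner : ∀ (u : K → ℂ), Continuous u → HasCompactSupport u →
      Continuous fun x => ∫ y, T y * u (y⁻¹ * x) ∂μ := by
    intro u hu hcu
    apply contParam μ (F := fun x y => T y * u (y⁻¹ * x))
    · exact (hT.comp continuous_snd).mul (hu.comp (continuous_snd.inv.mul continuous_fst))
    · intro L hL
      refine ⟨L * (tsupport u)⁻¹, hL.mul hcu.inv, fun x hx y hy => ?_⟩
      have h2 : u (y⁻¹ * x) = 0 := by
        by_contra h
        exact hy ⟨x, hx, (y⁻¹ * x)⁻¹, Set.inv_mem_inv.2 (subset_tsupport _ h), by group⟩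
      rw [h2, mul_zero]
  -- integrability of outer integrands
  have outer_int : ∀ (A v : K → ℂ), Continuous A → Continuous v → HasCompactSupport v →
      Integrable (fun x => A x * conj (v x)) μ := by
    intro A v hA hv hcv
    apply (hA.mul (continuous_conj.comp hv)).integrable_of_hasCompactSupport
    apply hcs_of_subset hcv
    intro x hx
    have : v x ≠ 0 := by
      intro h; apply hx; simp [Function.mem_support, h]
    exact subset_tsupport _ this
  -- Fubini helper
  have swap_helper : ∀ (F : K → K → ℂ), Continuous (fun p : K × K => F p.1 p.2) →
      (∃ C₁ C₂ : Set K, IsCompact C₁ ∧ IsCompact C₂ ∧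
        ∀ x y, F x y ≠ 0 → x ∈ C₁ ∧ y ∈ C₂) →
      ∫ x, ∫ y, F x y ∂μ ∂μ = ∫ y, ∫ x, F x y ∂μ ∂μ := by
    rintro F hF ⟨C₁, C₂, h₁, h₂, hsupp⟩
    apply integral_integral_swap_of_hasCompactSupport hF
    apply hcs_of_subset (h₁.prod h₂)
    rintro ⟨x, y⟩ hxy
    exact ⟨(hsupp x y hxy).1, (hsupp x y hxy).2⟩
  -- the sesquilinear form
  set P : (K → ℂ) → (K → ℂ) → ℂ :=
    fun u v => ∫ x, (∫ y, T y * u (y⁻¹ * x) ∂μ) * conj (v x) ∂μ with hPdef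
  have PaddL : ∀ u u' v : K → ℂ, Continuous u → HasCompactSupport u →
      Continuous u' → HasCompactSupport u' → Continuous v → HasCompactSupport v →
      P (fun z => u z + u' z) v = P u v + P u' v := by
    intro u u' v hu hcu hu' hcu' hv hcv
    simp only [hPdef]
    calc ∫ x, (∫ y, T y * (u (y⁻¹ * x) + u' (y⁻¹ * x)) ∂μ) * conj (v x) ∂μ
        = ∫ x, ((∫ y, T y * u (y⁻¹ * x) ∂μ) * conj (v x)
            + (∫ y, T y * u' (y⁻¹ * x) ∂μ) * conj (v x)) ∂μ := by
          congr 1; funext x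
          rw [show (fun y => T y * (u (y⁻¹ * x) + u' (y⁻¹ * x)))
              = fun y => T y * u (y⁻¹ * x) + T y * u' (y⁻¹ * x) from funext fun y => by ring]
          rw [integral_add (int_inner u hu hcu x) (int_inner u' hu' hcu' x), add_mul]
      _ = _ := integral_add (outer_int _ v (cont_inner u hu hcu) hv hcv)
            (outer_int _ v (cont_inner u' hu' hcu') hv hcv)
  have PaddR : ∀ u v v' : K → ℂ, Continuous u → HasCompactSupport u →
      Continuous v → HasCompactSupport v → Continuous v' → HasCompactSupport v' →
      P u (fun z => v z + v' z) = P u v + P u v' := by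
    intro u v v' hu hcu hv hcv hv' hcv'
    simp only [hPdef]
    calc ∫ x, (∫ y, T y * u (y⁻¹ * x) ∂μ) * conj (v x + v' x) ∂μ
        = ∫ x, ((∫ y, T y * u (y⁻¹ * x) ∂μ) * conj (v x)
            + (∫ y, T y * u (y⁻¹ * x) ∂μ) * conj (v' x)) ∂μ := by
          congr 1; funext x; rw [map_add]; ring
      _ = _ := integral_add (outer_int _ v (cont_inner u hu hcu) hv hcv)
            (outer_int _ v' (cont_inner u hu hcu) hv' hcv')
  have PsmulL : ∀ (c : ℂ) (u v : K → ℂ), P (fun z => c * u z) v = c * P u v := by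
    intro c u v
    simp only [hPdef]
    calc ∫ x, (∫ y, T y * (c * u (y⁻¹ * x)) ∂μ) * conj (v x) ∂μ
        = ∫ x, c * ((∫ y, T y * u (y⁻¹ * x) ∂μ) * conj (v x)) ∂μ := by
          congr 1; funext x
          rw [show (fun y => T y * (c * u (y⁻¹ * x)))
              = fun y => c * (T y * u (y⁻¹ * x)) from funext fun y => by ring]
          rw [integral_const_mul]; ring
      _ = _ := integral_const_mul c _
  have PsmulR : ∀ (c : ℂ) (u v : K → ℂ), P u (fun z => c * v z) = conj c * P u v := by
    intro c u v
    simp only [hPdef]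
    calc ∫ x, (∫ y, T y * u (y⁻¹ * x) ∂μ) * conj (c * v x) ∂μ
        = ∫ x, conj c * ((∫ y, T y * u (y⁻¹ * x) ∂μ) * conj (v x)) ∂μ := by
          congr 1; funext x; rw [map_mul]; ring
      _ = _ := integral_const_mul _ _
  have Pim : ∀ u : K → ℂ, Continuous u → HasCompactSupport u → conj (P u u) = P u u := by
    intro u hu hcu
    rw [RCLike.conj_eq_iff_im]
    exact (hpd u hu hcu).2
  have herm : ∀ u v : K → ℂ, Continuous u → HasCompactSupport u →
      Continuous v → HasCompactSupport v → P u v = conj (P v u) := by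
    intro u v hu hcu hv hcv
    have hiv : Continuous fun z => Complex.I * v z := continuous_const.mul hv
    have hciv : HasCompactSupport fun z => Complex.I * v z := by
      apply hcs_of_subset hcv
      intro z hz
      have : v z ≠ 0 := by intro h; apply hz; simp [Function.mem_support, h]
      exact subset_tsupport _ this
    have h1 := Pim (fun z => u z + v z) (hu.add hv) (hcu.add hcv)
    have h2 := Pim (fun z => u z + Complex.I * v z) (hu.add hiv) (hcu.add hciv)
    have e1 : P (fun z => u z + v z) (fun z => u z + v z)
        = P u u + P u v + (P v u + P v v) := by
      rw [PaddL u v (fun z => u z + v z) hu hcu hv hcv (hu.add hv) (hcu.add hcv),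
          PaddR u u v hu hcu hu hcu hv hcv, PaddR v u v hv hcv hu hcu hv hcv]
    have e2 : P (fun z => u z + Complex.I * v z) (fun z => u z + Complex.I * v z)
        = P u u + conj Complex.I * P u v
          + (Complex.I * P v u + Complex.I * (conj Complex.I * P v v)) := by
      rw [PaddL u _ (fun z => u z + Complex.I * v z) hu hcu hiv hciv (hu.add hiv) (hcu.add hciv),
          PaddR u u _ hu hcu hu hcu hiv hciv,
          PsmulL Complex.I v _, PaddR v u _ hv hcv hu hcu hiv hciv,
          PsmulR Complex.I u v, PsmulR Complex.I v v]
      ring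
    rw [e1] at h1
    rw [e2] at h2
    have hpuu := Pim u hu hcu
    have hpvv := Pim v hv hcv
    simp only [map_add, map_mul, map_neg, Complex.conj_I, Complex.conj_conj] at h1 h2
    rw [hpuu, hpvv] at h1 h2
    have h3 : Complex.I * (conj (P u v) - conj (P v u) + P u v - P v u) = 0 := by
      linear_combination h2
    have h4 : conj (P u v) - conj (P v u) + P u v - P v u = 0 :=
      (mul_eq_zero.mp h3).resolve_left Complex.I_ne_zero
    linear_combination (-(1:ℂ)/2) * h1 + ((1:ℂ)/2) * h4
  -- now the main argument for a fixed u
  intro u hu hcu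
  have cont_F2 : Continuous fun x => ∫ y, T (x * y) * u y⁻¹ ∂μ := by
    apply contParam μ (F := fun x y => T (x * y) * u y⁻¹)
    · exact (hT.comp (continuous_fst.mul continuous_snd)).mul (hu.comp continuous_snd.inv)
    · intro L hL
      refine ⟨(tsupport u)⁻¹, hcu.inv, fun x _ y hy => ?_⟩
      have h2 : u y⁻¹ = 0 := by
        by_contra h
        exact hy (Set.mem_inv.2 (by simpa using subset_tsupport _ h))
      rw [h2, mul_zero]
  have cont_F3 : Continuous fun x => ∫ y, conj (T y) * u (y * x) ∂μ := by
    apply contParam μ (F := fun x y => conj (T y) * u (y * x))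
    · exact (continuous_conj.comp (hT.comp continuous_snd)).mul
        (hu.comp (continuous_snd.mul continuous_fst))
    · intro L hL
      refine ⟨tsupport u * L⁻¹, hcu.mul hL.inv, fun x hx y hy => ?_⟩
      have h2 : u (y * x) = 0 := by
        by_contra h
        exact hy ⟨y * x, subset_tsupport _ h, x⁻¹, Set.inv_mem_inv.2 hx, by group⟩
      rw [h2, mul_zero]
  have E1 : ∀ x : K, (∫ y, T (x * y) * u y⁻¹ ∂μ) = ∫ y, T y * u (y⁻¹ * x) ∂μ := by
    intro x
    rw [show (fun y => T (x * y) * u y⁻¹)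
        = fun y => (fun z => T z * u (z⁻¹ * x)) (x * y) from funext fun y => by
          simp only []
          rw [show (x * y)⁻¹ * x = y⁻¹ from by group]]
    exact integral_mul_left_eq_self (fun z => T z * u (z⁻¹ * x)) x
  have E3 : ∀ v : K → ℂ, Continuous v → HasCompactSupport v →
      conj (P v u) = ∫ x, (∫ y, conj (T y) * u (y * x) ∂μ) * conj (v x) ∂μ := by
    intro v hv hcv
    simp only [hPdef]
    calc conj (∫ x, (∫ y, T y * v (y⁻¹ * x) ∂μ) * conj (u x) ∂μ)
        = ∫ x, conj ((∫ y, T y * v (y⁻¹ * x) ∂μ) * conj (u x)) ∂μ := integral_conj.symm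
      _ = ∫ x, (∫ y, conj (T y) * conj (v (y⁻¹ * x)) ∂μ) * u x ∂μ := by
          congr 1; funext x
          rw [map_mul, Complex.conj_conj, ← integral_conj,
            show (fun z => conj (T z * v (z⁻¹ * x))) = fun z => conj (T z) * conj (v (z⁻¹ * x))
              from funext fun z => map_mul (starRingEnd ℂ) _ _]
      _ = ∫ x, ∫ y, conj (T y) * conj (v (y⁻¹ * x)) * u x ∂μ ∂μ := by
          congr 1; funext x
          rw [integral_mul_const]
      _ = ∫ y, ∫ x, conj (T y) * conj (v (y⁻¹ * x)) * u x ∂μ ∂μ := by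
          apply swap_helper
          · exact ((continuous_conj.comp (hT.comp continuous_snd)).mul
              (continuous_conj.comp (hv.comp (continuous_snd.inv.mul continuous_fst)))).mul
              (hu.comp continuous_fst)
          · refine ⟨tsupport u, tsupport u * (tsupport v)⁻¹, hcu, hcu.mul hcv.inv,
              fun x y h => ?_⟩
            have hux : u x ≠ 0 := fun h0 => h (by simp [h0])
            have hvx : v (y⁻¹ * x) ≠ 0 := fun h0 => h (by simp [h0])
            exact ⟨subset_tsupport _ hux, ⟨x, subset_tsupport _ hux, (y⁻¹ * x)⁻¹,
              Set.inv_mem_inv.2 (subset_tsupport _ hvx), by group⟩⟩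
      _ = ∫ y, conj (T y) * ∫ x, conj (v x) * u (y * x) ∂μ ∂μ := by
          congr 1; funext y
          rw [show (fun x => conj (T y) * conj (v (y⁻¹ * x)) * u x)
              = fun x => conj (T y) * (conj (v (y⁻¹ * x)) * u x) from funext fun x => by ring]
          rw [integral_const_mul]
          congr 1
          rw [show (fun x => conj (v x) * u (y * x))
              = fun x => (fun z => conj (v (y⁻¹ * z)) * u z) (y * x) from funext fun x => by
                simp only []
                rw [show y⁻¹ * (y * x) = x from by group]]
          exact (integral_mul_left_eq_self (fun z => conj (v (y⁻¹ * z)) * u z) y).symm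
      _ = ∫ y, ∫ x, conj (T y) * (conj (v x) * u (y * x)) ∂μ ∂μ := by
          congr 1; funext y
          rw [integral_const_mul]
      _ = ∫ x, ∫ y, conj (T y) * (conj (v x) * u (y * x)) ∂μ ∂μ := by
          apply swap_helper
          · exact (continuous_conj.comp (hT.comp continuous_fst)).mul
              ((continuous_conj.comp (hv.comp continuous_snd)).mul
                (hu.comp (continuous_fst.mul continuous_snd)))
          · refine ⟨tsupport u * (tsupport v)⁻¹, tsupport v, hcu.mul hcv.inv, hcv,
              fun y x h => ?_⟩
            have hvx : v x ≠ 0 := fun h0 => h (by simp [h0])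
            have huyx : u (y * x) ≠ 0 := fun h0 => h (by simp [h0])
            exact ⟨⟨y * x, subset_tsupport _ huyx, x⁻¹,
              Set.inv_mem_inv.2 (subset_tsupport _ hvx), by group⟩, subset_tsupport _ hvx⟩
      _ = ∫ x, (∫ y, conj (T y) * u (y * x) ∂μ) * conj (v x) ∂μ := by
          congr 1; funext x
          rw [show (fun y => conj (T y) * (conj (v x) * u (y * x)))
              = fun y => conj (v x) * (conj (T y) * u (y * x)) from funext fun y => by ring]
          rw [integral_const_mul]
          ring
  have main : ∀ v : K → ℂ, Continuous v → HasCompactSupport v →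
      ∫ x, ((∫ y, T (x * y) * u y⁻¹ ∂μ) - ∫ y, conj (T y) * u (y * x) ∂μ) * conj (v x) ∂μ
        = 0 := by
    intro v hv hcv
    have hs : ∫ x, ((∫ y, T (x * y) * u y⁻¹ ∂μ) - ∫ y, conj (T y) * u (y * x) ∂μ)
          * conj (v x) ∂μ
        = (∫ x, (∫ y, T (x * y) * u y⁻¹ ∂μ) * conj (v x) ∂μ)
          - ∫ x, (∫ y, conj (T y) * u (y * x) ∂μ) * conj (v x) ∂μ := by
      rw [← integral_sub (outer_int _ v cont_F2 hv hcv) (outer_int _ v cont_F3 hv hcv)]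
      congr 1; funext x; ring
    rw [hs]
    have h2 : ∫ x, (∫ y, T (x * y) * u y⁻¹ ∂μ) * conj (v x) ∂μ = P u v := by
      simp only [hPdef]
      congr 1; funext x
      rw [E1 x]
    rw [h2, herm u v hu hcu hv hcv, E3 v hv hcv, sub_self]
  have hzero := testzero μ (cont_F2.sub cont_F3) main
  intro x
  exact sub_eq_zero.mp (hzero x)

lemma htranslate (μ : Measure K) [μ.IsHaarMeasure] (Δ : K → ℝ) (hΔpos : ∀ x, 0 < Δ x)
    (hΔ : ∀ g : K, Measure.map (fun x => x * g) μ = ENNReal.ofReal (Δ g) • μ)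
    (T : K → ℂ) (hT : Continuous T) (u : K → ℂ) (hu : Continuous u) (x : K) :
    (∫ y, conj (T y) * u (y * x) ∂μ)
      = ((Δ x : ℝ) : ℂ) * ∫ y, conj (T (y * x⁻¹)) * u y ∂μ := by
  have hψ : Continuous fun y => conj (T (y * x⁻¹)) * u y :=
    (continuous_conj.comp (hT.comp (continuous_mul_right x⁻¹))).mul hu
  calc ∫ y, conj (T y) * u (y * x) ∂μ
      = ∫ y, conj (T (y * x * x⁻¹)) * u (y * x) ∂μ := by
        congr 1; funext y; rw [mul_inv_cancel_right]
    _ = ∫ z, conj (T (z * x⁻¹)) * u z ∂(Measure.map (fun y => y * x) μ) := by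
        rw [integral_map (measurable_mul_const x).aemeasurable hψ.aestronglyMeasurable]
    _ = ∫ z, conj (T (z * x⁻¹)) * u z ∂(ENNReal.ofReal (Δ x) • μ) := by rw [hΔ x]
    _ = (ENNReal.ofReal (Δ x)).toReal • ∫ z, conj (T (z * x⁻¹)) * u z ∂μ :=
        integral_smul_measure _ _
    _ = _ := by rw [ENNReal.toReal_ofReal (hΔpos x).le, Complex.real_smul]

lemma key (μ : Measure K) [μ.IsHaarMeasure] (Δ : K → ℝ) (hΔpos : ∀ x, 0 < Δ x)
    (hΔ : ∀ g : K, Measure.map (fun x => x * g) μ = ENNReal.ofReal (Δ g) • μ)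
    (T : K → ℂ) (hT : Continuous T) (hpd : IsLeftPositiveDefinite μ T) :
    ∀ x : K, T x = ((Δ x : ℝ) : ℂ) * conj (T x⁻¹) := by
  intro x
  have star : ∀ u : K → ℂ, Continuous u → HasCompactSupport u →
      (∫ y, T (x * y) * u y⁻¹ ∂μ)
        = ((Δ x : ℝ) : ℂ) * ∫ y, conj (T (y * x⁻¹)) * u y ∂μ := by
    intro u hu hcu
    rw [sharp μ T hT hpd u hu hcu x, htranslate μ Δ hΔpos hΔ T hT u hu x]
  by_contra hne
  have hd : 0 < ‖T x - ((Δ x : ℝ) : ℂ) * conj (T x⁻¹)‖ := by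
    rw [norm_pos_iff]
    exact sub_ne_zero.2 hne
  set d := ‖T x - ((Δ x : ℝ) : ℂ) * conj (T x⁻¹)‖ with hdd
  have hΔx := hΔpos x
  set ε := d / (2 * (1 + Δ x)) with hε
  have hεpos : 0 < ε := div_pos hd (by positivity)
  have hO1 : IsOpen {y : K | ‖T (x * y) - T x‖ < ε} :=
    isOpen_lt ((hT.comp (continuous_mul_left x)).sub continuous_const).norm continuous_const
  have hO2 : IsOpen {y : K | ‖T (y * x⁻¹) - T x⁻¹‖ < ε} :=
    isOpen_lt ((hT.comp (continuous_mul_right x⁻¹)).sub continuous_const).norm continuous_const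
  set W := {y : K | ‖T (x * y) - T x‖ < ε} ∩ {y : K | ‖T (y * x⁻¹) - T x⁻¹‖ < ε} with hW
  have hWopen : IsOpen W := hO1.inter hO2
  have hWmem : (1 : K) ∈ W := by
    constructor <;> simp [hεpos]
  set V := W ∩ W⁻¹ with hV
  have hVopen : IsOpen V := hWopen.inter hWopen.inv
  have hVmem : (1 : K) ∈ V := ⟨hWmem, by simpa using hWmem⟩
  have hVsymm : ∀ y : K, y ∈ V → y⁻¹ ∈ V := by
    rintro y ⟨h1, h2⟩
    exact ⟨h2, by simpa using h1⟩
  obtain ⟨u, hu1, hu0, hucc, hu01⟩ := exists_continuous_one_zero_of_isCompact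
    (isCompact_singleton : IsCompact {(1 : K)}) hVopen.isClosed_compl
    (Set.disjoint_singleton_left.2 (by simp [hVmem]))
  have u1 : u 1 = 1 := hu1 rfl
  have uV : ∀ z : K, z ∉ V → u z = 0 := fun z hz => hu0 hz
  set u₀ : K → ℝ := fun y => u y + u y⁻¹ with hu₀
  have hu₀c : Continuous u₀ := u.continuous.add (u.continuous.comp continuous_inv)
  have hu₀cc : HasCompactSupport u₀ := by
    apply hcs_of_subset (hucc.union hucc.inv : IsCompact (tsupport u ∪ (tsupport ⇑u)⁻¹))
    intro y hy
    by_cases h : u y = 0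
    · have h2 : u y⁻¹ ≠ 0 := by
        intro h3; apply hy; simp only [hu₀, h, h3, add_zero]
      exact Or.inr (Set.mem_inv.2 (by simpa using subset_tsupport _ h2))
    · exact Or.inl (subset_tsupport _ h)
  have hu₀nn : ∀ y, 0 ≤ u₀ y := fun y => add_nonneg (hu01 y).1 (hu01 _).1
  have hu₀1 : u₀ 1 = 2 := by simp [hu₀, u1]; norm_num
  have hu₀V : ∀ y, y ∉ V → u₀ y = 0 := by
    intro y hy
    have h1 : u y = 0 := uV y hy
    have h2 : u y⁻¹ = 0 := by
      apply uV
      intro h3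
      exact hy (by simpa using hVsymm _ h3)
    simp [hu₀, h1, h2]
  have hu₀symm : ∀ y, u₀ y⁻¹ = u₀ y := by
    intro y; simp [hu₀, add_comm]
  set uc : K → ℂ := fun y => ((u₀ y : ℝ) : ℂ) with huc
  have hucC : Continuous uc := Complex.continuous_ofReal.comp hu₀c
  have hucCC : HasCompactSupport uc := by
    apply hcs_of_subset hu₀cc
    intro y hy
    have : u₀ y ≠ 0 := by
      intro h; apply hy; simp [huc, h]
    exact subset_tsupport _ this
  set I := ∫ y, u₀ y ∂μ with hIdef
  have hIint : Integrable u₀ μ := hu₀c.integrable_of_hasCompactSupport hu₀cc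
  have hsuppopen : IsOpen (Function.support u₀) :=
    isOpen_compl_singleton.preimage hu₀c
  have hIpos : 0 < I := by
    apply (integral_pos_iff_support_of_nonneg (fun y => hu₀nn y) hIint).2
    apply hsuppopen.measure_pos μ
    exact ⟨1, by simp [Function.mem_support, hu₀1]⟩
  have hI : ∫ y, uc y ∂μ = ((I : ℝ) : ℂ) := integral_ofReal
  have key_est : ∀ (g : K → ℂ) (c : ℂ), Continuous g → (∀ y ∈ V, ‖g y - c‖ < ε) →
      ‖(∫ y, g y * uc y ∂μ) - c * ((I : ℝ) : ℂ)‖ ≤ ε * I := by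
    intro g c hg hgV
    have hsupp : HasCompactSupport fun y => g y * uc y - c * uc y := by
      apply hcs_of_subset hucCC
      intro y hy
      have : uc y ≠ 0 := by
        intro h; apply hy; simp [h]
      exact subset_tsupport _ this
    have hint1 : Integrable (fun y => g y * uc y) μ :=
      (hg.mul hucC).integrable_of_hasCompactSupport (by
        apply hcs_of_subset hucCC
        intro y hy
        have : uc y ≠ 0 := by intro h; apply hy; simp [h]
        exact subset_tsupport _ this)
    have hint2 : Integrable (fun y => c * uc y) μ :=
      (hucC.integrable_of_hasCompactSupport hucCC).const_mul c
    have hconst : c * ((I : ℝ) : ℂ) = ∫ y, c * uc y ∂μ := by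
      rw [integral_const_mul, hI]
    rw [hconst, ← integral_sub hint1 hint2]
    have hnorm : Integrable (fun y => ‖g y * uc y - c * uc y‖) μ := (hint1.sub hint2).norm
    calc ‖∫ y, (g y * uc y - c * uc y) ∂μ‖
        ≤ ∫ y, ‖g y * uc y - c * uc y‖ ∂μ := norm_integral_le_integral_norm _
      _ ≤ ∫ y, ε * u₀ y ∂μ := by
          apply integral_mono hnorm (hIint.const_mul ε)
          intro y
          show ‖g y * uc y - c * uc y‖ ≤ ε * u₀ y
          by_cases hy : u₀ y = 0
          · simp [huc, hy]
          · have hyV : y ∈ V := by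
              by_contra h
              exact hy (hu₀V y h)
            have heq : ‖g y * uc y - c * uc y‖ = ‖g y - c‖ * u₀ y := by
              rw [← sub_mul, norm_mul]
              congr 1
              rw [huc]
              simp only []
              rw [Complex.norm_real, Real.norm_eq_abs]
              exact abs_of_nonneg (hu₀nn y)
            rw [heq]
            exact mul_le_mul_of_nonneg_right (le_of_lt (hgV y hyV)) (hu₀nn y)
      _ = ε * I := by rw [integral_const_mul]
  have est1 : ‖(∫ y, T (x * y) * uc y ∂μ) - T x * ((I : ℝ) : ℂ)‖ ≤ ε * I :=
    key_est (fun y => T (x * y)) (T x) (hT.comp (continuous_mul_left x))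
      (fun y hy => hy.1.1)
  have est2 : ‖(∫ y, conj (T (y * x⁻¹)) * uc y ∂μ) - conj (T x⁻¹) * ((I : ℝ) : ℂ)‖ ≤ ε * I :=
    key_est (fun y => conj (T (y * x⁻¹))) (conj (T x⁻¹))
      (continuous_conj.comp (hT.comp (continuous_mul_right x⁻¹)))
      (fun y hy => by
        rw [← map_sub, RCLike.norm_conj]
        exact hy.1.2)
  have hstar := star uc hucC hucCC
  have hsymint : (∫ y, T (x * y) * uc y⁻¹ ∂μ) = ∫ y, T (x * y) * uc y ∂μ := by
    congr 1; funext y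
    rw [show uc y⁻¹ = uc y from by rw [huc]; simp only []; rw [hu₀symm y]]
  rw [hsymint] at hstar
  have hbound : ‖(T x - ((Δ x : ℝ) : ℂ) * conj (T x⁻¹)) * ((I : ℝ) : ℂ)‖
      ≤ ε * I + Δ x * (ε * I) := by
    have expand : (T x - ((Δ x : ℝ) : ℂ) * conj (T x⁻¹)) * ((I : ℝ) : ℂ)
        = (T x * ((I : ℝ) : ℂ) - ∫ y, T (x * y) * uc y ∂μ)
          + ((Δ x : ℝ) : ℂ)
            * ((∫ y, conj (T (y * x⁻¹)) * uc y ∂μ) - conj (T x⁻¹) * ((I : ℝ) : ℂ)) := by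
      rw [hstar]; ring
    rw [expand]
    refine (norm_add_le _ _).trans (add_le_add ?_ ?_)
    · rw [norm_sub_rev]; exact est1
    · rw [norm_mul, Complex.norm_real, Real.norm_eq_abs, abs_of_pos hΔx]
      exact mul_le_mul_of_nonneg_left est2 hΔx.le
  have hlhs : ‖(T x - ((Δ x : ℝ) : ℂ) * conj (T x⁻¹)) * ((I : ℝ) : ℂ)‖ = d * I := by
    rw [norm_mul, Complex.norm_real, Real.norm_eq_abs, abs_of_pos hIpos]
  rw [hlhs] at hbound
  have hεe : ε * I + Δ x * (ε * I) = d / 2 * I := by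
    rw [hε]
    field_simp
  rw [hεe] at hbound
  nlinarith


end Aux

theorem stmt10 {G H : Type*}
    [Group G] [TopologicalSpace G] [IsTopologicalGroup G]
    [LocallyCompactSpace G] [MeasurableSpace G] [BorelSpace G]
    [Group H] [TopologicalSpace H] [IsTopologicalGroup H]
    [LocallyCompactSpace H] [MeasurableSpace H] [BorelSpace H]
    (μG : Measure G) [μG.IsHaarMeasure] (μH : Measure H) [μH.IsHaarMeasure]
    (ΔG : G → ℝ) (hΔGpos : ∀ x, 0 < ΔG x)
    (hΔG : ∀ g : G, Measure.map (fun x => x * g) μG = ENNReal.ofReal (ΔG g) • μG)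
    (ΔH : H → ℝ) (hΔHpos : ∀ x, 0 < ΔH x)
    (hΔH : ∀ g : H, Measure.map (fun x => x * g) μH = ENNReal.ofReal (ΔH g) • μH)
    (π : G →* H) (hπ : Continuous π)
    (hpull : ∀ f : H → ℂ, Continuous f → HasCompactSupport f →
      IsLeftPositiveDefinite μH f →
      IsLeftPositiveDefinite μG (fun x : G => f (π x))) :
    ∀ x : G,
      (∃ f : H → ℂ, Continuous f ∧ HasCompactSupport f ∧
        IsLeftPositiveDefinite μH f ∧ f (π x) ≠ 0) →
      ΔG x = ΔH (π x) := by
  rintro x ⟨f, hf, hcf, hpdf, hfx⟩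
  have hG := key μG ΔG hΔGpos hΔG (fun z : G => f (π z)) (hf.comp hπ)
    (hpull f hf hcf hpdf)
  have hH := key μH ΔH hΔHpos hΔH f hf hpdf
  have e1 : f (π x) = ((ΔG x : ℝ) : ℂ) * conj (f ((π x)⁻¹)) := by
    simpa [map_inv] using hG x
  have e2 : f (π x) = ((ΔH (π x) : ℝ) : ℂ) * conj (f ((π x)⁻¹)) := hH (π x)
  have hc : conj (f ((π x)⁻¹)) ≠ 0 := by
    intro h
    apply hfx
    rw [e1, h, mul_zero]
  have : ((ΔG x : ℝ) : ℂ) = ((ΔH (π x) : ℝ) : ℂ) :=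
    mul_right_cancel₀ hc (e1.symm.trans e2)
  exact_mod_cast this
end

section
/- Let G and H be locally compact groups and π : G → H an open continuous homomorphism with kernel N. Suppose the left Haar measure of N is invariant under all inner automorphisms of G (i.e. μ_N(xAx⁻¹) = μ_N(A) for all x ∈ G and measurable A ⊆ N). Then Δ_G(x) = Δ_{G/N}(xN) for all x ∈ G, i.e. the modular function of G is the pullback by the quotient map of the modular function of G/N. -/
open MeasureTheory Function Set
open scoped Pointwise
open scoped ENNReal
set_option linter.unusedSectionVars false

section Weil

variable {G : Type*} [Group G] [TopologicalSpace G] [IsTopologicalGroup G]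
  [MeasurableSpace G] [BorelSpace G]
  (N : Subgroup G) (μN : Measure N)

instance Subgroup.borelSpace' : BorelSpace ↥N := Subtype.borelSpace (N : Set G)

/-- Push a function down to the quotient by integrating over fibers. -/
noncomputable def nbar [μN.IsMulLeftInvariant] (f : G → ℝ) : G ⧸ N → ℝ :=
  fun c => Quotient.liftOn' c (fun x => ∫ n : N, f (x * ↑n) ∂μN) (by
    intro a b hab
    have h : a⁻¹ * b ∈ N := QuotientGroup.leftRel_apply.1 hab
    have : ∀ n : N, b * ↑n = a * ↑((⟨a⁻¹ * b, h⟩ : N) * n) := by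
      intro n; push_cast; group
    simp only [this]
    exact (integral_mul_left_eq_self (μ := μN) (fun m : N => f (a * ↑m)) ⟨a⁻¹ * b, h⟩).symm)

lemma nbar_mk [μN.IsMulLeftInvariant] (f : G → ℝ) (x : G) :
    nbar N μN f (QuotientGroup.mk x) = ∫ n : N, f (x * ↑n) ∂μN := rfl


variable {N} in
lemma compact_preimage_val (hNc : IsClosed (N : Set G)) {C : Set G} (hC : IsCompact C) :
    IsCompact {n : N | (n : G) ∈ C} :=
  hNc.isClosedEmbedding_subtypeVal.isCompact_preimage hC

lemma continuous_integral_N [IsFiniteMeasureOnCompacts μN]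
    {P : Type*} [TopologicalSpace P] [LocallyCompactSpace P]
    {u : P → N → ℝ} (hu : Continuous fun q : P × N => u q.1 q.2)
    (hsupp : ∀ K : Set P, IsCompact K →
      ∃ k : Set N, IsCompact k ∧ ∀ p ∈ K, ∀ n : N, u p n ≠ 0 → n ∈ k) :
    Continuous fun p => ∫ n, u p n ∂μN := by
  refine continuous_iff_continuousAt.2 fun p₀ => ?_
  obtain ⟨t, t_comp, ht⟩ := exists_compact_mem_nhds p₀
  obtain ⟨k, k_comp, hk⟩ := hsupp t t_comp
  have A : ContinuousOn (fun p => ∫ n, u p n ∂μN) t := by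
    apply continuousOn_integral_of_compact_support k_comp
    · exact hu.continuousOn
    · exact fun p n hp hn => by_contra fun h => hn (hk p hp n h)
  exact A.continuousAt ht

variable [LocallyCompactSpace G]

lemma nbar_continuous (hNc : IsClosed (N : Set G)) [μN.IsMulLeftInvariant]
    [IsFiniteMeasureOnCompacts μN] {f : G → ℝ}
    (hf : Continuous f) (h'f : HasCompactSupport f) : Continuous (nbar N μN f) := by
  rw [(QuotientGroup.isQuotientMap_mk N).continuous_iff]
  have e : (nbar N μN f ∘ QuotientGroup.mk) = fun x : G => ∫ n : N, f (x * ↑n) ∂μN := rfl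
  rw [e]
  apply continuous_integral_N N μN
    (hf.comp (continuous_fst.mul (continuous_subtype_val.comp continuous_snd)))
  intro K hK
  refine ⟨{n : N | (n : G) ∈ K⁻¹ * tsupport f}, compact_preimage_val hNc (hK.inv.mul h'f), ?_⟩
  intro p hp n hn
  have h2 : p * ↑n ∈ tsupport f := subset_tsupport _ hn
  show (↑n : G) ∈ K⁻¹ * tsupport f
  exact ⟨p⁻¹, Set.inv_mem_inv.2 hp, p * ↑n, h2, by group⟩

variable [hNn : N.Normal]

lemma nbar_hasCompactSupport [μN.IsMulLeftInvariant] {f : G → ℝ}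
    (h'f : HasCompactSupport f) : HasCompactSupport (nbar N μN f) := by
  apply HasCompactSupport.intro (h'f.image QuotientGroup.continuous_mk)
  intro c hc
  obtain ⟨x, rfl⟩ := QuotientGroup.mk_surjective c
  have h : ∀ n : N, f (x * ↑n) = 0 := by
    intro n
    by_contra h
    exact hc ⟨x * ↑n, subset_tsupport f h, QuotientGroup.mk_mul_of_mem x n.2⟩
  rw [nbar_mk]
  simp [h]

lemma nbar_nonneg [μN.IsMulLeftInvariant] {f : G → ℝ} (hf : 0 ≤ f) (c : G ⧸ N) :
    0 ≤ nbar N μN f c := by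
  refine QuotientGroup.induction_on c fun x => ?_
  rw [nbar_mk]
  exact integral_nonneg fun n => hf _

lemma nbar_left [μN.IsMulLeftInvariant] (f : G → ℝ) (g : G) :
    nbar N μN (fun x => f (g * x)) = fun c => nbar N μN f ((QuotientGroup.mk g : G ⧸ N) * c) := by
  funext c
  refine QuotientGroup.induction_on c fun x => ?_
  have h1 : (QuotientGroup.mk g : G ⧸ N) * QuotientGroup.mk x = QuotientGroup.mk (g * x) :=
    (QuotientGroup.mk_mul N g x).symm
  rw [h1, nbar_mk, nbar_mk]
  congr 1 with n
  rw [mul_assoc]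

lemma nbar_smul [μN.IsMulLeftInvariant] (f : G → ℝ) (a : ℝ) :
    nbar N μN (fun x => a * f x) = fun c => a * nbar N μN f c := by
  funext c
  refine QuotientGroup.induction_on c fun x => ?_
  rw [nbar_mk, nbar_mk]
  exact integral_const_mul a _

lemma nbar_right (hNn : N.Normal) [μN.IsMulLeftInvariant]
    (hinv : ∀ x : G,
      Measure.map (fun n : N => (⟨x * n * x⁻¹, hNn.conj_mem n n.2 x⟩ : N)) μN = μN)
    {f : G → ℝ} (hf : Continuous f) (g : G) :
    nbar N μN (fun x => f (x * g)) = fun c => nbar N μN f (c * QuotientGroup.mk g) := by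
  funext c
  refine QuotientGroup.induction_on c fun x => ?_
  have h1 : (QuotientGroup.mk x : G ⧸ N) * QuotientGroup.mk g = QuotientGroup.mk (x * g) :=
    (QuotientGroup.mk_mul N x g).symm
  rw [h1, nbar_mk, nbar_mk]
  have hconj : Continuous (fun n : N => (⟨g⁻¹ * ↑n * g⁻¹⁻¹, hNn.conj_mem n n.2 g⁻¹⟩ : N)) :=
    Continuous.subtype_mk ((continuous_const.mul continuous_subtype_val).mul continuous_const) _
  have hF : Continuous (fun m : N => f (x * g * ↑m)) :=
    hf.comp (continuous_const.mul continuous_subtype_val)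
  have h3 : ∫ m : N, f (x * g * ↑m) ∂μN
      = ∫ n : N, f (x * g * (g⁻¹ * ↑n * g⁻¹⁻¹)) ∂μN := by
    conv_lhs => rw [← hinv g⁻¹]
    rw [integral_map hconj.measurable.aemeasurable hF.aestronglyMeasurable]
  rw [h3]
  congr 1 with n
  congr 1
  group


lemma swapJ [μN.IsMulLeftInvariant] [IsFiniteMeasureOnCompacts μN]
    (hNc : IsClosed (N : Set G))
    [MeasurableSpace (G ⧸ N)] [BorelSpace (G ⧸ N)]
    (μQ : Measure (G ⧸ N)) [IsFiniteMeasureOnCompacts μQ]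
    (ν : Measure G) [IsFiniteMeasureOnCompacts ν]
    {Φ : G → G → ℝ} (hΦ : Continuous (uncurry Φ)) (h'Φ : HasCompactSupport (uncurry Φ)) :
    ∫ y, (∫ c, nbar N μN (fun x => Φ x y) c ∂μQ) ∂ν
      = ∫ c, nbar N μN (fun x => ∫ y, Φ x y ∂ν) c ∂μQ := by
  set T := tsupport (uncurry Φ) with hT
  have T_comp : IsCompact T := h'Φ
  set Ψ : G ⧸ N → G → ℝ := fun c y => nbar N μN (fun x => Φ x y) c with hΨ
  -- continuity of the lifted kernel
  have key : Continuous fun p : G × G => ∫ n : N, Φ (p.1 * ↑n) p.2 ∂μN := by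
    apply continuous_integral_N N μN
    · exact hΦ.comp (((continuous_fst.comp continuous_fst).mul
        (continuous_subtype_val.comp continuous_snd)).prodMk
        (continuous_snd.comp continuous_fst))
    · intro K hK
      refine ⟨{n : N | (n : G) ∈ (Prod.fst '' K)⁻¹ * (Prod.fst '' T)},
        compact_preimage_val hNc (((hK.image continuous_fst).inv).mul
          (T_comp.image continuous_fst)), ?_⟩
      intro p hp n hn
      have hx : (p.1 * ↑n, p.2) ∈ T := subset_tsupport _ hn
      show (↑n : G) ∈ (Prod.fst '' K)⁻¹ * (Prod.fst '' T)
      exact ⟨p.1⁻¹, Set.inv_mem_inv.2 ⟨p, hp, rfl⟩, p.1 * ↑n, ⟨_, hx, rfl⟩, by group⟩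
  have hΨc : Continuous (uncurry Ψ) := by
    have h := ((QuotientGroup.isOpenQuotientMap_mk (N := N)).prodMap
      IsOpenQuotientMap.id).continuous_comp_iff (g := uncurry Ψ)
    exact h.1 key
  have hΨcs : HasCompactSupport (uncurry Ψ) := by
    apply HasCompactSupport.intro'
      ((T_comp.image (QuotientGroup.continuous_mk.prodMap continuous_id)).closure)
      isClosed_closure
    rintro ⟨c, y⟩ hp
    refine QuotientGroup.induction_on c (fun x hp => ?_) hp
    have h : ∀ n : N, Φ (x * ↑n) y = 0 := by
      intro n
      by_contra h
      refine hp (subset_closure ?_)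
      refine ⟨(x * ↑n, y),
        subset_tsupport _ (show (x * ↑n, y) ∈ Function.support (uncurry Φ) from h), ?_⟩
      simp [Prod.map, QuotientGroup.mk_mul_of_mem x n.2]
    show (∫ n : N, Φ (x * ↑n) y ∂μN) = 0
    simp [h]
  calc ∫ y, (∫ c, Ψ c y ∂μQ) ∂ν
      = ∫ c, (∫ y, Ψ c y ∂ν) ∂μQ :=
        (integral_integral_swap_of_hasCompactSupport hΨc hΨcs).symm
    _ = ∫ c, nbar N μN (fun x => ∫ y, Φ x y ∂ν) c ∂μQ := by
        congr 1 with c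
        refine QuotientGroup.induction_on c (fun x => ?_)
        show ∫ y, (∫ n : N, Φ (x * ↑n) y ∂μN) ∂ν
            = ∫ n : N, (∫ y, Φ (x * ↑n) y ∂ν) ∂μN
        have hc : Continuous (uncurry fun (n : N) (y : G) => Φ (x * ↑n) y) :=
          hΦ.comp (((continuous_const.mul (continuous_subtype_val.comp continuous_fst))).prodMk
            continuous_snd)
        have k1_comp : IsCompact {n : N | x * (n : G) ∈ closure (Prod.fst '' T)} := by
          have : IsCompact ((fun z : G => x * z) ⁻¹' closure (Prod.fst '' T)) :=
            (Homeomorph.mulLeft x).isCompact_preimage.2 (T_comp.image continuous_fst).closure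
          exact compact_preimage_val hNc this
        have hcs : HasCompactSupport (uncurry fun (n : N) (y : G) => Φ (x * ↑n) y) := by
          apply HasCompactSupport.intro'
            (k1_comp.prod ((T_comp.image continuous_snd).closure))
            (IsClosed.prod (isClosed_closure.preimage
              ((continuous_mul_left x).comp continuous_subtype_val)) isClosed_closure)
          rintro ⟨n, y⟩ hny
          by_contra h
          apply hny
          have hm : (x * ↑n, y) ∈ T :=
            subset_tsupport _ (show (x * ↑n, y) ∈ Function.support (uncurry Φ) from h)
          exact ⟨subset_closure ⟨_, hm, rfl⟩, subset_closure ⟨_, hm, rfl⟩⟩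
        exact (integral_integral_swap_of_hasCompactSupport hc hcs).symm

end Weil

theorem stmt19 {G : Type*} [Group G] [TopologicalSpace G] [IsTopologicalGroup G]
    [LocallyCompactSpace G] [MeasurableSpace G] [BorelSpace G]
    (μG : Measure G) [μG.IsHaarMeasure]
    (N : Subgroup G) [hNn : N.Normal] (hNc : IsClosed (N : Set G))
    [MeasurableSpace (G ⧸ N)] [BorelSpace (G ⧸ N)]
    (μN : Measure N) [μN.IsHaarMeasure]
    (hinv : ∀ x : G,
      Measure.map (fun n : N => (⟨x * n * x⁻¹, hNn.conj_mem n n.2 x⟩ : N)) μN = μN)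
    (μQ : Measure (G ⧸ N)) [μQ.IsHaarMeasure]
    (ΔG : G → ℝ) (hΔGpos : ∀ x, 0 < ΔG x)
    (hΔG : ∀ g : G, Measure.map (fun y => y * g) μG = ENNReal.ofReal (ΔG g) • μG)
    (ΔQ : G ⧸ N → ℝ) (hΔQpos : ∀ q, 0 < ΔQ q)
    (hΔQ : ∀ q : G ⧸ N, Measure.map (fun y => y * q) μQ = ENNReal.ofReal (ΔQ q) • μQ) :
    ∀ x : G, ΔG x = ΔQ (QuotientGroup.mk x) := by
  intro g₀
  -- bump function
  obtain ⟨⟨g, g_cont⟩, g_comp, g_nonneg, g_one⟩ :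
      ∃ (g : C(G, ℝ)), HasCompactSupport g ∧ 0 ≤ g ∧ g 1 ≠ 0 := exists_continuous_nonneg_pos 1
  have int_g_pos : 0 < ∫ x, g x ∂μG :=
    g_cont.integral_pos_of_hasCompactSupport_nonneg_nonzero g_comp g_nonneg g_one
  set ν := μG.inv with hν
  set D : G → ℝ := fun x : G => ∫ z, g (z⁻¹ * x) ∂ν with hD
  have D_cont : Continuous D := continuous_integral_apply_inv_mul g_cont g_comp
  have D_pos : ∀ x, 0 < D x := by
    intro x
    have C : Continuous (fun y => g (y⁻¹ * x)) := g_cont.comp (continuous_inv.mul continuous_const)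
    apply (integral_pos_iff_support_of_nonneg _ _).2
    · apply C.isOpen_support.measure_pos ν
      exact ⟨x * 1⁻¹, by simpa using g_one⟩
    · exact fun y => g_nonneg (y⁻¹ * x)
    · apply C.integrable_of_hasCompactSupport
      exact g_comp.comp_homeomorph ((Homeomorph.inv G).trans (Homeomorph.mulRight x))
  -- the quotient functional
  set J : (G → ℝ) → ℝ := fun f => ∫ c, nbar N μN f c ∂μQ with hJdef
  have Jcongr : ∀ f₁ f₂ : G → ℝ, f₁ = f₂ → J f₁ = J f₂ := fun f₁ f₂ h => by rw [h]
  have Jleft : ∀ (φ : G → ℝ) (y : G), J (fun x => φ (y * x)) = J φ := by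
    intro φ y
    show (∫ c, nbar N μN (fun x => φ (y * x)) c ∂μQ) = ∫ c, nbar N μN φ c ∂μQ
    rw [nbar_left]
    exact integral_mul_left_eq_self (μ := μQ) (fun c => nbar N μN φ c) (QuotientGroup.mk y)
  -- `J` satisfies the same combo identity as any left-invariant integral
  have comboJ : ∀ f : G → ℝ, Continuous f → HasCompactSupport f →
      J f = (∫ y, f y * (D y)⁻¹ ∂ν) * J g := by
    intro f hf h'f
    let K := tsupport f
    have K_comp : IsCompact K := h'f
    let L := tsupport g
    have L_comp : IsCompact L := g_comp
    let M := (fun (p : G × G) => p.1 * p.2⁻¹) '' (K ×ˢ L)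
    have M_comp : IsCompact M :=
      (K_comp.prod L_comp).image (continuous_fst.mul continuous_snd.inv)
    calc J f
        = J (fun x => ∫ y, f x * (D x)⁻¹ * g (y⁻¹ * x) ∂ν) := by
          apply Jcongr
          funext x
          rw [integral_const_mul, mul_assoc, inv_mul_cancel₀ (D_pos x).ne', mul_one]
      _ = ∫ y, J (fun x => f x * (D x)⁻¹ * g (y⁻¹ * x)) ∂ν := by
          refine (swapJ N μN hNc μQ ν ?_ ?_).symm
          · apply Continuous.mul
            · exact (hf.comp continuous_fst).mul
                ((D_cont.comp continuous_fst).inv₀ (fun x => (D_pos _).ne'))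
            · exact g_cont.comp (continuous_snd.inv.mul continuous_fst)
          · have hvan : ∀ (p : G × G), p ∉ K ×ˢ closure M →
                f p.1 * (D p.1)⁻¹ * g (p.2⁻¹ * p.1) = 0 := by
              rintro ⟨x, y⟩ hxy
              by_cases H : x ∈ K; swap
              · simp [image_eq_zero_of_notMem_tsupport H]
              have hg0 : g (y⁻¹ * x) = 0 := by
                apply image_eq_zero_of_notMem_tsupport
                contrapose! hxy
                simp only [Set.mem_prod, H, true_and]
                apply subset_closure
                simp only [M, Set.mem_image, Set.mem_prod, Prod.exists]
                exact ⟨x, y⁻¹ * x, ⟨H, hxy⟩, by group⟩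
              simp [hg0]
            exact HasCompactSupport.intro' (K_comp.prod M_comp.closure)
              ((isClosed_tsupport f).prod isClosed_closure) hvan
      _ = ∫ y, J (fun x => f (y * x) * (D (y * x))⁻¹ * g x) ∂ν := by
          congr 1 with y
          rw [← Jleft (fun x => f x * (D x)⁻¹ * g (y⁻¹ * x)) y]
          apply Jcongr
          funext x
          simp only [inv_mul_cancel_left]
      _ = J (fun x => ∫ y, f (y * x) * (D (y * x))⁻¹ * g x ∂ν) := by
          refine swapJ N μN hNc μQ ν ?_ ?_
          · apply Continuous.mul ?_ (g_cont.comp continuous_fst)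
            exact (hf.comp (continuous_snd.mul continuous_fst)).mul
              ((D_cont.comp (continuous_snd.mul continuous_fst)).inv₀ (fun x => (D_pos _).ne'))
          · have hvan : ∀ (p : G × G), p ∉ L ×ˢ closure M →
                f (p.2 * p.1) * (D (p.2 * p.1))⁻¹ * g p.1 = 0 := by
              rintro ⟨x, y⟩ hxy
              by_cases H : x ∈ L; swap
              · simp [image_eq_zero_of_notMem_tsupport H]
              have hf0 : f (y * x) = 0 := by
                apply image_eq_zero_of_notMem_tsupport
                contrapose! hxy
                simp only [Set.mem_prod, H, true_and]
                apply subset_closure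
                simp only [M, Set.mem_image, Set.mem_prod, Prod.exists]
                exact ⟨y * x, x, ⟨hxy, H⟩, by group⟩
              simp [hf0]
            exact HasCompactSupport.intro' (L_comp.prod M_comp.closure)
              ((isClosed_tsupport g).prod isClosed_closure) hvan
      _ = J (fun x => (∫ y, f y * (D y)⁻¹ ∂ν) * g x) := by
          apply Jcongr
          funext x
          rw [integral_mul_const]
          congr 1
          exact integral_mul_right_eq_self (μ := ν) (fun y => f y * (D y)⁻¹) x
      _ = (∫ y, f y * (D y)⁻¹ ∂ν) * J g := by
          show (∫ c, nbar N μN _ c ∂μQ) = _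
          rw [nbar_smul]
          exact integral_const_mul _ _
  -- combo for `μG`
  have comboG : ∀ f : G → ℝ, Continuous f → HasCompactSupport f →
      ∫ x, f x ∂μG = (∫ y, f y * (D y)⁻¹ ∂ν) * ∫ x, g x ∂μG := fun f hf h'f =>
    Measure.integral_isMulLeftInvariant_isMulRightInvariant_combo hf h'f g_cont g_comp
      g_nonneg g_one
  have hJG : ∀ f : G → ℝ, Continuous f → HasCompactSupport f →
      (∫ x, g x ∂μG) * J f = (∫ x, f x ∂μG) * J g := by
    intro f hf h'f
    rw [comboJ f hf h'f, comboG f hf h'f]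
    ring
  -- positivity of `J g`
  have fiber_pos : 0 < ∫ n : N, g (1 * (n : G)) ∂μN := by
    apply Continuous.integral_pos_of_hasCompactSupport_nonneg_nonzero
      (x := (1 : N))
    · exact g_cont.comp (continuous_const.mul continuous_subtype_val)
    · apply HasCompactSupport.intro' (compact_preimage_val hNc g_comp)
        ((isClosed_tsupport g).preimage continuous_subtype_val)
      intro n hn
      apply image_eq_zero_of_notMem_tsupport
      intro hcon
      exact hn (by simpa [one_mul] using hcon)
    · exact fun n => g_nonneg _
    · simpa using g_one
  have Jg_pos : 0 < J g := by
    apply Continuous.integral_pos_of_hasCompactSupport_nonneg_nonzero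
      (x := (QuotientGroup.mk (1 : G)))
    · exact nbar_continuous N μN hNc g_cont g_comp
    · exact nbar_hasCompactSupport N μN g_comp
    · exact nbar_nonneg N μN g_nonneg
    · rw [nbar_mk]
      exact fiber_pos.ne'
  -- translate `g` on the right by `g₀`
  have f₀_cont : Continuous (fun x => g (x * g₀)) :=
    g_cont.comp (continuous_id.mul continuous_const)
  have f₀_comp : HasCompactSupport (fun x => g (x * g₀)) :=
    g_comp.comp_homeomorph (Homeomorph.mulRight g₀)
  have hG : ∫ x, g (x * g₀) ∂μG = ΔG g₀ * ∫ x, g x ∂μG := by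
    have h1 : ∫ x, g (x * g₀) ∂μG = ∫ z, g z ∂(Measure.map (fun y => y * g₀) μG) :=
      (integral_map (measurable_mul_const g₀).aemeasurable g_cont.aestronglyMeasurable).symm
    rw [h1, hΔG g₀, integral_smul_measure, ENNReal.toReal_ofReal (hΔGpos g₀).le, smul_eq_mul]
  have hQ : J (fun x => g (x * g₀)) = ΔQ (QuotientGroup.mk g₀) * J g := by
    show (∫ c, nbar N μN (fun x => g (x * g₀)) c ∂μQ) = _
    rw [nbar_right N μN hNn hinv g_cont g₀]
    have h1 : ∫ c, nbar N μN (g) (c * QuotientGroup.mk g₀) ∂μQ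
        = ∫ d, nbar N μN (g) d ∂(Measure.map (fun y => y * QuotientGroup.mk g₀) μQ) :=
      (integral_map (measurable_mul_const (QuotientGroup.mk g₀)).aemeasurable
        (nbar_continuous N μN hNc g_cont g_comp).aestronglyMeasurable).symm
    rw [h1, hΔQ (QuotientGroup.mk g₀), integral_smul_measure,
      ENNReal.toReal_ofReal (hΔQpos (QuotientGroup.mk g₀)).le, smul_eq_mul]
  -- put everything together
  have key := hJG (fun x => g (x * g₀)) f₀_cont f₀_comp
  rw [hQ, hG] at key
  have : ΔQ (QuotientGroup.mk g₀) * ((∫ x, g x ∂μG) * J g)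
      = ΔG g₀ * ((∫ x, g x ∂μG) * J g) := by ring_nf; ring_nf at key; linarith [key]
  have hne : (∫ x, g x ∂μG) * J g ≠ 0 := (mul_pos int_g_pos Jg_pos).ne'
  have := mul_right_cancel₀ hne this
  exact this.symm
end
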